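/- Let κ < 0, let v_1, …, v_N ∈ 𝕃^{n, κ}, and let α_1, …, α_N ≥ 0 with Σ_{j=1}^N α_j > 0. Set s = Σ_{j=1}^N α_j v_j. Then the Lorentzian midpoint m = s / √(|κ| · |⟨s, s⟩_L|) lies in 𝕃^{n, κ}; that is, ⟨m, m⟩_L = 1/κ and the time-like component of m is strictly positive. -/

import Mathlib

/-- Real inverse hyperbolic cosine. -/
noncomputable def arcosh (x : ℝ) : ℝ := Real.log (x + Real.sqrt (x ^ 2 - 1))

/-- Lorentzian inner product on ℝ^{n+1}: ⟨x, y⟩_L = −x₀y₀ + Σ_{i=1}^n xᵢyᵢ. -/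
noncomputable def lorentzInner {n : ℕ} (x y : Fin (n + 1) → ℝ) : ℝ :=
  -(x 0 * y 0) + ∑ i : Fin n, x i.succ * y i.succ

/-- The Lorentz model 𝕃^{n,κ}: ⟨x, x⟩_L = 1/κ and positive time-like component. -/
def inLorentz {n : ℕ} (κ : ℝ) (x : Fin (n + 1) → ℝ) : Prop :=
  lorentzInner x x = 1 / κ ∧ 0 < x 0

/-- Lorentz distance d^κ(x,y) = (1/√|κ|)·arcosh(κ·⟨x,y⟩_L). -/
noncomputable def lorentzDist {n : ℕ} (κ : ℝ) (x y : Fin (n + 1) → ℝ) : ℝ :=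
  (1 / Real.sqrt |κ|) * arcosh (κ * lorentzInner x y)

/-!
Two points of the same sheet of the hyperboloid satisfy the reverse Cauchy–Schwarz inequality
⟨v, w⟩_L ≤ 1/κ. Expanding ⟨s, s⟩_L bilinearly therefore gives ⟨s, s⟩_L ≤ (Σ α_j)²/κ < 0, so s is
time-like, and its time component Σ α_j (v_j)₀ is positive. Rescaling a time-like future vector s by
1/√(κ ⟨s, s⟩_L) puts it on the hyperboloid 𝕃^{n,κ}.
-/

open Finset

noncomputable def lorentzForm (n : ℕ) : LinearMap.BilinForm ℝ (Fin (n + 1) → ℝ) :=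
  LinearMap.mk₂ ℝ lorentzInner
    (fun x y z => by simp only [lorentzInner, Pi.add_apply, add_mul, sum_add_distrib]; ring)
    (fun c x y => by
      simp only [lorentzInner, Pi.smul_apply, smul_eq_mul, mul_add, mul_sum, mul_neg, mul_assoc])
    (fun x y z => by simp only [lorentzInner, Pi.add_apply, mul_add, sum_add_distrib]; ring)
    (fun c x y => by
      simp only [lorentzInner, Pi.smul_apply, smul_eq_mul, mul_add, mul_sum, mul_neg,
        mul_left_comm c])

section LorentzInner

variable {n : ℕ}

@[simp]
lemma lorentzForm_apply (x y : Fin (n + 1) → ℝ) : lorentzForm n x y = lorentzInner x y := rfl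

lemma lorentzInner_smul_smul (c : ℝ) (x : Fin (n + 1) → ℝ) :
    lorentzInner (c • x) (c • x) = c ^ 2 * lorentzInner x x := by
  simp only [← lorentzForm_apply, map_smul, LinearMap.smul_apply, smul_eq_mul]
  ring

lemma lorentzInner_sum_smul_sum_smul {ι : Type*} (t : Finset ι) (α : ι → ℝ)
    (v : ι → Fin (n + 1) → ℝ) :
    lorentzInner (∑ i ∈ t, α i • v i) (∑ j ∈ t, α j • v j) =
      ∑ i ∈ t, ∑ j ∈ t, α i * α j * lorentzInner (v i) (v j) := by
  simp only [← lorentzForm_apply, map_sum, map_smul, LinearMap.sum_apply,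
    LinearMap.smul_apply, smul_eq_mul, mul_sum]
  rw [sum_comm]
  exact sum_congr rfl fun _ _ => sum_congr rfl fun _ _ => by ring

/-- The reverse Cauchy–Schwarz inequality on the future light cone. -/
lemma lorentzInner_le_of_lorentzInner_self_eq {c : ℝ} (hc : c ≤ 0) {x y : Fin (n + 1) → ℝ}
    (hx₀ : 0 ≤ x 0) (hy₀ : 0 ≤ y 0) (hx : lorentzInner x x = c) (hy : lorentzInner y y = c) :
    lorentzInner x y ≤ c := by
  set A := ∑ i : Fin n, x i.succ ^ 2
  set B := ∑ i : Fin n, y i.succ ^ 2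
  set P := ∑ i : Fin n, x i.succ * y i.succ
  have hxA : x 0 ^ 2 = A - c := by simp only [lorentzInner, ← sq] at hx; linarith
  have hyB : y 0 ^ 2 = B - c := by simp only [lorentzInner, ← sq] at hy; linarith
  have hCS : P ^ 2 ≤ A * B := sum_mul_sq_le_sq_mul_sq _ _ _
  have hAMGM : 2 * P ≤ A + B := by
    have : 0 ≤ ∑ i : Fin n, (x i.succ - y i.succ) ^ 2 := sum_nonneg fun i _ => sq_nonneg _
    simp only [sub_sq, sum_add_distrib, sum_sub_distrib, mul_assoc, ← mul_sum] at this
    linarith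
  -- `(P - c)² ≤ AB - c (A + B) + c²` by Cauchy–Schwarz and `2P ≤ A + B`, as `c ≤ 0`
  have hsq : (P - c) ^ 2 ≤ (x 0 * y 0) ^ 2 := by
    rw [mul_pow, hxA, hyB]; nlinarith
  have := (abs_le_of_sq_le_sq' hsq (mul_nonneg hx₀ hy₀)).2
  simp only [lorentzInner]
  linarith

end LorentzInner

section LorentzModel

variable {n : ℕ} {κ : ℝ}

lemma lorentzInner_le_of_inLorentz (hκ : κ < 0) {x y : Fin (n + 1) → ℝ} (hx : inLorentz κ x)
    (hy : inLorentz κ y) : lorentzInner x y ≤ 1 / κ :=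
  lorentzInner_le_of_lorentzInner_self_eq (one_div_neg.2 hκ).le hx.2.le hy.2.le hx.1 hy.1

lemma lorentzInner_sum_smul_self_le {ι : Type*} (hκ : κ < 0) (t : Finset ι)
    {v : ι → Fin (n + 1) → ℝ} (hv : ∀ i ∈ t, inLorentz κ (v i)) {α : ι → ℝ}
    (hα : ∀ i ∈ t, 0 ≤ α i) :
    lorentzInner (∑ i ∈ t, α i • v i) (∑ i ∈ t, α i • v i) ≤ (∑ i ∈ t, α i) ^ 2 / κ :=
  calc lorentzInner (∑ i ∈ t, α i • v i) (∑ i ∈ t, α i • v i)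
      = ∑ i ∈ t, ∑ j ∈ t, α i * α j * lorentzInner (v i) (v j) :=
        lorentzInner_sum_smul_sum_smul t α v
    _ ≤ ∑ i ∈ t, ∑ j ∈ t, α i * α j * (1 / κ) :=
        sum_le_sum fun i hi => sum_le_sum fun j hj =>
          mul_le_mul_of_nonneg_left (lorentzInner_le_of_inLorentz hκ (hv i hi) (hv j hj))
            (mul_nonneg (hα i hi) (hα j hj))
    _ = (∑ i ∈ t, α i) ^ 2 / κ := by
        simp only [sq, sum_mul_sum, sum_div, mul_one_div]

lemma inLorentz_smul_of_lorentzInner_self_neg (hκ : κ < 0) {s : Fin (n + 1) → ℝ}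
    (hss : lorentzInner s s < 0) (hs₀ : 0 < s 0) :
    inLorentz κ ((1 / Real.sqrt (|κ| * |lorentzInner s s|)) • s) := by
  have hpos : 0 < |κ| * |lorentzInner s s| := mul_pos (abs_pos.2 hκ.ne) (abs_pos.2 hss.ne)
  refine ⟨?_, mul_pos (by positivity) hs₀⟩
  rw [lorentzInner_smul_smul, div_pow, one_pow, Real.sq_sqrt hpos.le, abs_of_neg hκ,
    abs_of_neg hss, neg_mul_neg, one_div_mul_eq_div, div_mul_cancel_right₀ hss.ne, one_div]

end LorentzModel

lemma sum_smul_apply_pos {ι α : Type*} (t : Finset ι) {c : ι → ℝ} {v : ι → α → ℝ} {a : α}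
    (hc : ∀ i ∈ t, 0 ≤ c i) (hsum : 0 < ∑ i ∈ t, c i) (hv : ∀ i ∈ t, 0 < v i a) :
    0 < (∑ i ∈ t, c i • v i) a := by
  obtain ⟨j, hj, hcj⟩ : ∃ j ∈ t, 0 < c j := by
    simpa using exists_lt_of_sum_lt (show ∑ i ∈ t, (0 : ℝ) < ∑ i ∈ t, c i by simpa using hsum)
  rw [Finset.sum_apply]
  exact sum_pos' (fun i hi => mul_nonneg (hc i hi) (hv i hi).le) ⟨j, hj, mul_pos hcj (hv j hj)⟩

/-- The Lorentzian midpoint of a weighted sum lies in 𝕃^{n,κ}. -/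
theorem lorentzian_midpoint_mem (n N : ℕ) (κ : ℝ) (hκ : κ < 0)
    (v : Fin N → (Fin (n + 1) → ℝ)) (hv : ∀ j, inLorentz κ (v j))
    (α : Fin N → ℝ) (hα : ∀ j, 0 ≤ α j) (hsum : 0 < ∑ j, α j)
    (s : Fin (n + 1) → ℝ) (hs : s = ∑ j, α j • v j) :
    inLorentz κ ((1 / Real.sqrt (|κ| * |lorentzInner s s|)) • s) := by
  subst hs
  have htimelike : lorentzInner (∑ j, α j • v j) (∑ j, α j • v j) < 0 :=
    (lorentzInner_sum_smul_self_le hκ univ (fun j _ => hv j) fun j _ => hα j).trans_lt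
      (div_neg_of_pos_of_neg (pow_pos hsum 2) hκ)
  exact inLorentz_smul_of_lorentzInner_self_neg hκ htimelike
    (sum_smul_apply_pos univ (fun j _ => hα j) hsum fun j _ => (hv j).2)
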